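/- For all r ∈ (0,1), g(r) ≥ 0, with equality if and only if r = 20/21; in particular g(r) > 0 for all r ∈ (0, 20/21). -/
import Mathlib
set_option maxHeartbeats 1000000


/-- The lower-bound function `g` of Theorem II.1 (base-2 logarithms; since
`Real.logb 2 0 = 0`, terms of the form `0 · log₂ 0` vanish as intended). -/
noncomputable def g (r : ℝ) : ℝ :=
  (1/64) * (2*(1-r) * Real.logb 2 (1280*(1-r)/(43*r+20))
    + (63*r/10) * Real.logb 2 (64*r/(43*r+20))
    + 18*(1-r) * Real.logb 2 (640*(1-r)/(11*r+20))
    + (279*r/10) * Real.logb 2 (32*r/(11*r+20))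
    + 6*(1-r) * Real.logb 2 (1280*(1-r)/(r+60))
    + (61*r/10) * Real.logb 2 (64*r/(r+60))
    + 20*(1-r) * Real.logb 2 (64*(1-r)/(4-r))
    + 15*r * Real.logb 2 (16*r/(5*(4-r)))
    + 18*(1-r) * Real.logb 2 (640*(1-r)/(60-31*r))
    + (87*r/10) * Real.logb 2 (32*r/(60-31*r)))

lemma step_le (p q x : ℝ) (hp : 0 < p) (hq : 0 < q) (hx : x = p / q) :
    (p - q) / Real.log 2 ≤ p * Real.logb 2 x := by
  have hL : (0:ℝ) < Real.log 2 := Real.log_pos one_lt_two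
  have hlog : Real.log (q / p) ≤ q / p - 1 := Real.log_le_sub_one_of_pos (by positivity)
  have h2 : p - q ≤ -(p * Real.log (q / p)) := by
    have h3 := mul_le_mul_of_nonneg_left hlog hp.le
    have e : p * (q / p - 1) = q - p := by field_simp
    linarith [e ▸ h3]
  have e2 : p * Real.logb 2 x = (-(p * Real.log (q / p))) / Real.log 2 := by
    rw [hx, Real.logb, Real.log_div hp.ne' hq.ne', Real.log_div hq.ne' hp.ne']; ring
  rw [e2]
  gcongr

lemma step_lt (p q x : ℝ) (hp : 0 < p) (hq : 0 < q) (hx : x = p / q) (hne : p ≠ q) :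
    (p - q) / Real.log 2 < p * Real.logb 2 x := by
  have hL : (0:ℝ) < Real.log 2 := Real.log_pos one_lt_two
  have hq1 : q / p ≠ 1 := by
    intro h; apply hne
    field_simp at h; linarith
  have hlog : Real.log (q / p) < q / p - 1 := Real.log_lt_sub_one_of_pos (by positivity) hq1
  have h2 : p - q < -(p * Real.log (q / p)) := by
    have h3 := mul_lt_mul_of_pos_left hlog hp
    have e : p * (q / p - 1) = q - p := by field_simp
    linarith [e ▸ h3]
  have e2 : p * Real.logb 2 x = (-(p * Real.log (q / p))) / Real.log 2 := by
    rw [hx, Real.logb, Real.log_div hp.ne' hq.ne', Real.log_div hq.ne' hp.ne']; ring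
  rw [e2]
  gcongr

lemma g_pos_of_ne (r : ℝ) (h0 : 0 < r) (h1 : r < 1) (hne : r ≠ 20/21) : 0 < g r := by
  have hs : (0:ℝ) < 1 - r := by linarith
  have hd1 : (0:ℝ) < 43*r+20 := by linarith
  have hd2 : (0:ℝ) < 11*r+20 := by linarith
  have hd3 : (0:ℝ) < r+60 := by linarith
  have hd4 : (0:ℝ) < 4-r := by linarith
  have hd5 : (0:ℝ) < 60-31*r := by linarith
  have h1' : (2*(1-r) - (43*r+20)/640) / Real.log 2
      < 2*(1-r) * Real.logb 2 (1280*(1-r)/(43*r+20)) := by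
    refine step_lt _ _ _ (by linarith) (by linarith)
      (by field_simp [hd1.ne']; ring) ?_
    intro h; apply hne; field_simp at h; linarith
  have h2' : ((63*r/10) - 63*(43*r+20)/640) / Real.log 2
      ≤ (63*r/10) * Real.logb 2 (64*r/(43*r+20)) :=
    step_le _ _ _ (by linarith) (by linarith) (by field_simp [hd1.ne']; ring)
  have h3' : (18*(1-r) - 18*(11*r+20)/640) / Real.log 2
      ≤ 18*(1-r) * Real.logb 2 (640*(1-r)/(11*r+20)) :=
    step_le _ _ _ (by linarith) (by linarith) (by field_simp [hd2.ne'])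
  have h4' : ((279*r/10) - 279*(11*r+20)/320) / Real.log 2
      ≤ (279*r/10) * Real.logb 2 (32*r/(11*r+20)) :=
    step_le _ _ _ (by linarith) (by linarith) (by field_simp [hd2.ne']; ring)
  have h5' : (6*(1-r) - 6*(r+60)/1280) / Real.log 2
      ≤ 6*(1-r) * Real.logb 2 (1280*(1-r)/(r+60)) :=
    step_le _ _ _ (by linarith) (by linarith) (by field_simp [hd3.ne'])
  have h6' : ((61*r/10) - 61*(r+60)/640) / Real.log 2
      ≤ (61*r/10) * Real.logb 2 (64*r/(r+60)) :=
    step_le _ _ _ (by linarith) (by linarith) (by field_simp [hd3.ne']; ring)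
  have h7' : (20*(1-r) - 20*(4-r)/64) / Real.log 2
      ≤ 20*(1-r) * Real.logb 2 (64*(1-r)/(4-r)) :=
    step_le _ _ _ (by linarith) (by linarith) (by field_simp [hd4.ne'])
  have h8' : (15*r - 75*(4-r)/16) / Real.log 2
      ≤ 15*r * Real.logb 2 (16*r/(5*(4-r))) :=
    step_le _ _ _ (by linarith) (by linarith) (by field_simp [hd4.ne']; ring)
  have h9' : (18*(1-r) - 18*(60-31*r)/640) / Real.log 2
      ≤ 18*(1-r) * Real.logb 2 (640*(1-r)/(60-31*r)) :=
    step_le _ _ _ (by linarith) (by linarith) (by field_simp [hd5.ne'])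
  have h10' : ((87*r/10) - 87*(60-31*r)/320) / Real.log 2
      ≤ (87*r/10) * Real.logb 2 (32*r/(60-31*r)) :=
    step_le _ _ _ (by linarith) (by linarith) (by field_simp [hd5.ne']; ring)
  have hz : (2*(1-r) - (43*r+20)/640) / Real.log 2
      + ((63*r/10) - 63*(43*r+20)/640) / Real.log 2
      + (18*(1-r) - 18*(11*r+20)/640) / Real.log 2
      + ((279*r/10) - 279*(11*r+20)/320) / Real.log 2
      + (6*(1-r) - 6*(r+60)/1280) / Real.log 2
      + ((61*r/10) - 61*(r+60)/640) / Real.log 2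
      + (20*(1-r) - 20*(4-r)/64) / Real.log 2
      + (15*r - 75*(4-r)/16) / Real.log 2
      + (18*(1-r) - 18*(60-31*r)/640) / Real.log 2
      + ((87*r/10) - 87*(60-31*r)/320) / Real.log 2 = 0 := by
    have e : (2*(1-r) - (43*r+20)/640) + ((63*r/10) - 63*(43*r+20)/640)
      + (18*(1-r) - 18*(11*r+20)/640) + ((279*r/10) - 279*(11*r+20)/320)
      + (6*(1-r) - 6*(r+60)/1280) + ((61*r/10) - 61*(r+60)/640)
      + (20*(1-r) - 20*(4-r)/64) + (15*r - 75*(4-r)/16)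
      + (18*(1-r) - 18*(60-31*r)/640) + ((87*r/10) - 87*(60-31*r)/320) = 0 := by ring
    field_simp
    linarith [e]
  unfold g
  linarith [h1', h2', h3', h4', h5', h6', h7', h8', h9', h10', hz]

lemma g_at_eq : g (20/21) = 0 := by
  unfold g
  norm_num [Real.logb]

/-- For all `r ∈ (0,1)`, `g r ≥ 0`, with equality iff `r = 20/21`;
in particular `g r > 0` on `(0, 20/21)`. -/
theorem g_nonneg_iff :
    (∀ r ∈ Set.Ioo (0 : ℝ) 1, 0 ≤ g r ∧ (g r = 0 ↔ r = 20 / 21)) ∧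
      ∀ r ∈ Set.Ioo (0 : ℝ) (20 / 21), 0 < g r := by
  constructor
  · rintro r ⟨h0, h1⟩
    by_cases hr : r = 20/21
    · subst hr
      refine ⟨le_of_eq g_at_eq.symm, by simp [g_at_eq]⟩
    · have hpos := g_pos_of_ne r h0 h1 hr
      exact ⟨hpos.le, ⟨fun h => absurd h hpos.ne', fun h => absurd h hr⟩⟩
  · rintro r ⟨h0, h1⟩
    have h1' : r < 1 := by linarith [h1]
    exact g_pos_of_ne r h0 h1' (by intro h; rw [h] at h1; linarith)
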